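/- Let X be a finite ground set with m elements, let d ≥ 0 be an integer, and let f be a normalized monotone set function on X that is d-scopic submodular (equivalently, of supermodular width at most d). Let k be an integer with d + 1 ≤ k ≤ m and (d + 1) dividing k, and set t = k/(d + 1). Suppose S_0 = ∅ and for each i ∈ {1, …, t}, S_i = S_{i−1} ∪ T_i where T_i ⊆ X satisfies |T_i| ≤ d + 1 and f(T_i | S_{i−1}) ≥ f(T′ | S_{i−1}) for every T′ ⊆ X with |T′| ≤ d + 1 (batched greedy selection). Then |S_t| ≤ k and f(S_t) ≥ (1 − e^{−1/(d+1)}) · f(S*) for every S* ⊆ X with |S*| ≤ k. -/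

import Mathlib

/-!
By `d`-scopic submodularity, the margin of a single element `v` over any `A ⊇ S_{i-1}` is at most
the margin of `{v} ∪ T'` over `S_{i-1}` for some `|T'| ≤ d`, hence at most the greedy batch
margin `g_i`. Adding the elements of `S*` one at a time gives `f(S*) - f(S_{i-1}) ≤ k g_i`, so the
gap `f(S*) - f(S_i)` shrinks by a factor `1 - 1/k` per batch, and
`(1 - 1/k)^t ≤ e^{-t/k} = e^{-1/(d+1)}`.
-/

variable {α : Type*} [Fintype α] [DecidableEq α]

/-- The margin of `S` given `T`: `f(S|T) = f(S ∪ T) - f(T)`. -/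
def margin (f : Finset α → ℝ) (S T : Finset α) : ℝ := f (S ∪ T) - f T

/-- `f` is `d`-scopic submodular: for all `S ⊆ T` and `v ∉ T`,
`f({v}|T) ≤ max_{T' ⊆ T, |T'| ≤ d} f({v}|S ∪ T')`. -/
def ScopicSubmodular (d : ℕ) (f : Finset α → ℝ) : Prop :=
  ∀ S T : Finset α, S ⊆ T → ∀ v, v ∉ T →
    ∃ T' : Finset α, T' ⊆ T ∧ T'.card ≤ d ∧ margin f {v} T ≤ margin f {v} (S ∪ T')

section Greedy

variable {β : Type*} [DecidableEq β]

def IsGreedyBatch (f : Finset β → ℝ) (n : ℕ) (B T : Finset β) : Prop :=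
  ∀ T' : Finset β, T'.card ≤ n → margin f T' B ≤ margin f T B

variable {f : Finset β → ℝ}

lemma margin_empty_left (A : Finset β) : margin f ∅ A = 0 := by
  simp [margin]

lemma margin_of_subset {P A : Finset β} (h : P ⊆ A) : margin f P A = 0 := by
  simp [margin, Finset.union_eq_right.2 h]

lemma margin_union (P Q A : Finset β) :
    margin f (Q ∪ P) A = margin f P (Q ∪ A) + margin f Q A := by
  simp only [margin, Finset.union_assoc, Finset.union_left_comm P Q A]
  ring

lemma margin_le_margin_union (hmono : Monotone f) (P Q B : Finset β) :
    margin f P (B ∪ Q) ≤ margin f (P ∪ Q) B := by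
  have hB : f B ≤ f (B ∪ Q) := hmono Finset.subset_union_left
  have hsets : P ∪ (B ∪ Q) = P ∪ Q ∪ B := by
    rw [Finset.union_assoc, Finset.union_comm B Q]
  simp only [margin, hsets]
  linarith

lemma sub_le_margin (hmono : Monotone f) (P B : Finset β) : f P - f B ≤ margin f P B := by
  simpa [margin] using hmono (Finset.subset_union_left : P ⊆ P ∪ B)

namespace IsGreedyBatch

variable {n d : ℕ} {B T : Finset β}

lemma margin_nonneg (h : IsGreedyBatch f n B T) : 0 ≤ margin f T B :=
  margin_empty_left (f := f) B ▸ h ∅ (by simp)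

lemma margin_singleton_le (h : IsGreedyBatch f (d + 1) B T) (hmono : Monotone f)
    (hscopic : ScopicSubmodular d f) {A : Finset β} (hBA : B ⊆ A) (v : β) :
    margin f {v} A ≤ margin f T B := by
  by_cases hvA : v ∈ A
  · rw [margin_of_subset (Finset.singleton_subset_iff.2 hvA)]
    exact h.margin_nonneg
  obtain ⟨T', -, hT'card, hscope⟩ := hscopic B A hBA v hvA
  have hbatch : ({v} ∪ T').card ≤ d + 1 :=
    (Finset.card_union_le _ _).trans (by simpa [add_comm] using hT'card)
  calc margin f {v} A ≤ margin f {v} (B ∪ T') := hscope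
    _ ≤ margin f ({v} ∪ T') B := margin_le_margin_union hmono _ _ _
    _ ≤ margin f T B := h _ hbatch

lemma margin_le_card_mul (h : IsGreedyBatch f (d + 1) B T) (hmono : Monotone f)
    (hscopic : ScopicSubmodular d f) (P : Finset β) {A : Finset β} (hBA : B ⊆ A) :
    margin f P A ≤ P.card * margin f T B := by
  induction P using Finset.induction_on generalizing A with
  | empty => simp [margin_empty_left]
  | insert v P hv ih =>
    have hrest := ih (hBA.trans (Finset.subset_union_right : A ⊆ {v} ∪ A))
    have hfirst := h.margin_singleton_le hmono hscopic hBA v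
    rw [Finset.insert_eq, margin_union, Finset.card_union_of_disjoint
      (Finset.disjoint_singleton_left.2 hv), Finset.card_singleton]
    push_cast
    linarith

lemma sub_le_mul_sub (h : IsGreedyBatch f (d + 1) B T) (hmono : Monotone f)
    (hscopic : ScopicSubmodular d f) {P : Finset β} {k : ℕ} (hP : P.card ≤ k) :
    f P - f (B ∪ T) ≤ (1 - (k : ℝ)⁻¹) * (f P - f B) := by
  have hg := h.margin_nonneg
  have hgap : f P - f B ≤ margin f T B * k :=
    calc f P - f B ≤ margin f P B := sub_le_margin hmono P B
      _ ≤ P.card * margin f T B := h.margin_le_card_mul hmono hscopic P subset_rfl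
      _ ≤ margin f T B * k := by rw [mul_comm]; gcongr
  have hdiv : (f P - f B) / k ≤ margin f T B :=
    div_le_of_le_mul₀ k.cast_nonneg hg hgap
  rw [margin, Finset.union_comm] at hdiv
  linarith [show (1 - (k : ℝ)⁻¹) * (f P - f B) = f P - f B - (f P - f B) / k by ring]

end IsGreedyBatch

lemma card_le_mul_of_union_eq {S T : ℕ → Finset β} {n t : ℕ}
    (h0 : S 0 = ∅) (hstep : ∀ i < t, S (i + 1) = S i ∪ T (i + 1))
    (hcard : ∀ i < t, (T (i + 1)).card ≤ n) : ∀ i ≤ t, (S i).card ≤ n * i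
  | 0, _ => by simp [h0]
  | i + 1, hi => by
    rw [hstep i hi, mul_add_one]
    exact (Finset.card_union_le _ _).trans
      (add_le_add (card_le_mul_of_union_eq h0 hstep hcard i (by omega)) (hcard i hi))

lemma one_sub_inv_pow_le_exp (d : ℕ) {t : ℕ} (ht : 1 ≤ t) :
    (1 - (((d + 1) * t : ℕ) : ℝ)⁻¹) ^ t ≤ Real.exp (-(1 / ((d : ℝ) + 1))) := by
  have hd : 1 / ((d : ℝ) + 1) ≤ t :=
    (div_le_one_of_le₀ (by linarith [d.cast_nonneg (α := ℝ)]) (by positivity)).trans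
      (by exact_mod_cast ht)
  convert Real.one_sub_div_pow_le_exp_neg hd using 3
  push_cast
  field_simp

end Greedy

theorem batched_greedy_constrained_maximization_general (f : Finset α → ℝ)
    (hnorm : f ∅ = 0) (hmono : ∀ S T : Finset α, S ⊆ T → f S ≤ f T)
    (d : ℕ) (hscopic : ScopicSubmodular d f)
    (k t : ℕ) (hk₁ : d + 1 ≤ k) (hkt : k = (d + 1) * t)
    (S T : ℕ → Finset α) (hS0 : S 0 = ∅)
    (hstep : ∀ i, 1 ≤ i → i ≤ t → S i = S (i - 1) ∪ T i)
    (hTcard : ∀ i, 1 ≤ i → i ≤ t → (T i).card ≤ d + 1)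
    (hgreedy : ∀ i, 1 ≤ i → i ≤ t → ∀ T' : Finset α, T'.card ≤ d + 1 →
      margin f T' (S (i - 1)) ≤ margin f (T i) (S (i - 1))) :
    (S t).card ≤ k ∧
      ∀ Sstar : Finset α, Sstar.card ≤ k →
        (1 - Real.exp (-(1 / ((d : ℝ) + 1)))) * f Sstar ≤ f (S t) := by
  have ht : 1 ≤ t := Nat.pos_of_ne_zero (by rintro rfl; omega)
  have hstep' : ∀ i < t, S (i + 1) = S i ∪ T (i + 1) := fun i hi => by
    simpa using hstep (i + 1) (by omega) hi
  have hgreedy' : ∀ i < t, IsGreedyBatch f (d + 1) (S i) (T (i + 1)) := fun i hi T' hT' => by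
    simpa using hgreedy (i + 1) (by omega) hi T' hT'
  refine ⟨hkt ▸ card_le_mul_of_union_eq hS0 hstep' (fun i hi => hTcard (i + 1) (by omega) hi) t
    le_rfl, fun Sstar hSstar => ?_⟩
  have hgap : f Sstar - f (S t) ≤ (1 - (k : ℝ)⁻¹) ^ t * (f Sstar - f (S 0)) :=
    le_geom (u := fun i => f Sstar - f (S i)) (sub_nonneg.2 (Nat.cast_inv_le_one k)) t
      fun i hi => hstep' i hi ▸ (hgreedy' i hi).sub_le_mul_sub hmono hscopic hSstar
  rw [hS0, hnorm, sub_zero] at hgap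
  have hfS : 0 ≤ f Sstar := hnorm ▸ hmono ∅ Sstar (Finset.empty_subset _)
  have hexp := mul_le_mul_of_nonneg_right (hkt ▸ one_sub_inv_pow_le_exp d ht) hfS
  linarith

/-- batched greedy selection for cardinality-constrained maximization.
If `f` is normalized, monotone and `d`-scopic submodular, `k = (d+1)·t` with
`d + 1 ≤ k ≤ m`, and `S_i = S_{i-1} ∪ T_i` where each batch `T_i` (of size at most
`d + 1`) greedily maximizes the margin given `S_{i-1}`, then `|S_t| ≤ k` and
`f(S_t) ≥ (1 - e^{-1/(d+1)}) f(S*)` for every `S*` with `|S*| ≤ k`. -/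
theorem batched_greedy_constrained_maximization (f : Finset α → ℝ)
    (hnorm : f ∅ = 0) (hmono : ∀ S T : Finset α, S ⊆ T → f S ≤ f T)
    (d : ℕ) (hscopic : ScopicSubmodular d f)
    (k t : ℕ) (hk₁ : d + 1 ≤ k) (hk₂ : k ≤ Fintype.card α) (hkt : k = (d + 1) * t)
    (S T : ℕ → Finset α) (hS0 : S 0 = ∅)
    (hstep : ∀ i, 1 ≤ i → i ≤ t → S i = S (i - 1) ∪ T i)
    (hTcard : ∀ i, 1 ≤ i → i ≤ t → (T i).card ≤ d + 1)
    (hgreedy : ∀ i, 1 ≤ i → i ≤ t → ∀ T' : Finset α, T'.card ≤ d + 1 →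
      margin f T' (S (i - 1)) ≤ margin f (T i) (S (i - 1))) :
    (S t).card ≤ k ∧
      ∀ Sstar : Finset α, Sstar.card ≤ k →
        (1 - Real.exp (-(1 / ((d : ℝ) + 1)))) * f Sstar ≤ f (S t) :=
  batched_greedy_constrained_maximization_general f hnorm hmono d hscopic k t hk₁ hkt S T hS0 hstep
    hTcard hgreedy
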